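/- arXiv:1910.14466 — 11 statements merged into one kernel-verified Lean document; each statement's English description precedes it below -/
import Mathlib

section
/- Let M be a smooth manifold modelled on a real normed (Banach) space. Let P be a real linear subspace of the smooth real-valued functions on M, let {·,·} : P × P → (M → ℝ) be ℝ-bilinear and antisymmetric ({f,g} = −{g,f} pointwise), and let # assign to every f ∈ P a section #f of the tangent bundle of M such that for all f, g ∈ P and every m ∈ M, {f,g}(m) equals the manifold derivative of g at m evaluated on (#f)(m). Then the bracket at a point depends only on the differentials at that point: if f₁, f₂, g₁, g₂ ∈ P and m ∈ M satisfy mfderiv f₁ m = mfderiv f₂ m and mfderiv g₁ m = mfderiv g₂ m, then {f₁,g₁}(m) = {f₂,g₂}(m). -/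
open scoped Manifold

theorem stmt1_general
    {E : Type*} [NormedAddCommGroup E] [NormedSpace ℝ E]
    {HM : Type*} [TopologicalSpace HM] {I : ModelWithCorners ℝ E HM}
    {M : Type*} [TopologicalSpace M] [ChartedSpace HM M]
    (P : Set (M → ℝ))
    (bracket : (M → ℝ) → (M → ℝ) → M → ℝ)
    (hanti : ∀ f ∈ P, ∀ g ∈ P, ∀ m : M, bracket f g m = - bracket g f m)
    (X : (M → ℝ) → (m : M) → TangentSpace I m)
    (hcompat : ∀ f ∈ P, ∀ g ∈ P, ∀ m : M,
      bracket f g m = mfderiv I 𝓘(ℝ, ℝ) g m (X f m)) :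
    ∀ f₁ ∈ P, ∀ f₂ ∈ P, ∀ g₁ ∈ P, ∀ g₂ ∈ P, ∀ m : M,
      (mfderiv I 𝓘(ℝ, ℝ) f₁ m : TangentSpace I m →L[ℝ] ℝ)
        = (mfderiv I 𝓘(ℝ, ℝ) f₂ m : TangentSpace I m →L[ℝ] ℝ) →
      (mfderiv I 𝓘(ℝ, ℝ) g₁ m : TangentSpace I m →L[ℝ] ℝ)
        = (mfderiv I 𝓘(ℝ, ℝ) g₂ m : TangentSpace I m →L[ℝ] ℝ) →
      bracket f₁ g₁ m = bracket f₂ g₂ m := by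
  intro f₁ hf₁ f₂ hf₂ g₁ hg₁ g₂ hg₂ m hf hg
  -- Antisymmetry moves the first argument into the slot that `hcompat` differentiates.
  have congr_left : bracket f₁ g₁ m = bracket f₂ g₁ m := by
    rw [hanti f₁ hf₁ g₁ hg₁ m, hanti f₂ hf₂ g₁ hg₁ m,
      hcompat g₁ hg₁ f₁ hf₁ m, hcompat g₁ hg₁ f₂ hf₂ m]
    exact congrArg Neg.neg (DFunLike.congr_fun hf _)
  have congr_right : bracket f₂ g₁ m = bracket f₂ g₂ m := by
    rw [hcompat f₂ hf₂ g₁ hg₁ m, hcompat f₂ hf₂ g₂ hg₂ m]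
    exact DFunLike.congr_fun hg _
  rw [congr_left, congr_right]

/-- The bracket at a point depends only on the differentials at that point
(Proposition 2.2(iii)). -/
theorem stmt1
    {E : Type*} [NormedAddCommGroup E] [NormedSpace ℝ E]
    {HM : Type*} [TopologicalSpace HM] {I : ModelWithCorners ℝ E HM}
    [I.Boundaryless]
    {M : Type*} [TopologicalSpace M] [ChartedSpace HM M]
    [IsManifold I (⊤ : ℕ∞) M]
    (P : Set (M → ℝ))
    (hPsmooth : ∀ f ∈ P, ContMDiff I 𝓘(ℝ, ℝ) (⊤ : ℕ∞) f)
    (hPadd : ∀ f ∈ P, ∀ g ∈ P, f + g ∈ P)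
    (hPsmul : ∀ (c : ℝ), ∀ f ∈ P, c • f ∈ P)
    (bracket : (M → ℝ) → (M → ℝ) → M → ℝ)
    (hanti : ∀ f ∈ P, ∀ g ∈ P, ∀ m : M, bracket f g m = - bracket g f m)
    (haddl : ∀ f₁ ∈ P, ∀ f₂ ∈ P, ∀ g ∈ P, ∀ m : M,
      bracket (f₁ + f₂) g m = bracket f₁ g m + bracket f₂ g m)
    (hsmull : ∀ (c : ℝ), ∀ f ∈ P, ∀ g ∈ P, ∀ m : M,
      bracket (c • f) g m = c * bracket f g m)
    (haddr : ∀ f ∈ P, ∀ g₁ ∈ P, ∀ g₂ ∈ P, ∀ m : M,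
      bracket f (g₁ + g₂) m = bracket f g₁ m + bracket f g₂ m)
    (hsmulr : ∀ (c : ℝ), ∀ f ∈ P, ∀ g ∈ P, ∀ m : M,
      bracket f (c • g) m = c * bracket f g m)
    (X : (M → ℝ) → (m : M) → TangentSpace I m)
    (hcompat : ∀ f ∈ P, ∀ g ∈ P, ∀ m : M,
      bracket f g m = mfderiv I 𝓘(ℝ, ℝ) g m (X f m)) :
    ∀ f₁ ∈ P, ∀ f₂ ∈ P, ∀ g₁ ∈ P, ∀ g₂ ∈ P, ∀ m : M,
      (mfderiv I 𝓘(ℝ, ℝ) f₁ m : TangentSpace I m →L[ℝ] ℝ)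
        = (mfderiv I 𝓘(ℝ, ℝ) f₂ m : TangentSpace I m →L[ℝ] ℝ) →
      (mfderiv I 𝓘(ℝ, ℝ) g₁ m : TangentSpace I m →L[ℝ] ℝ)
        = (mfderiv I 𝓘(ℝ, ℝ) g₂ m : TangentSpace I m →L[ℝ] ℝ) →
      bracket f₁ g₁ m = bracket f₂ g₂ m :=
  stmt1_general P bracket hanti X hcompat
end

section
/- Let A be a unital C*-algebra and let p, q ∈ A be projections (self-adjoint idempotents: p* = p, p·p = p, q* = q, q·q = q). Then the following are equivalent: (1) there exists x ∈ A with p·q·x = p and x·p·q = q (i.e., p·q is invertible from the corner determined by q to the corner determined by p); (2) A decomposes as the direct sum of right ideals q·A and (1−p)·A, i.e., every a ∈ A can be written a = q·b + (1−p)·c for some b, c ∈ A, and every a ∈ A with q·a = a and p·a = 0 equals 0. -/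
/-- Characterization of the chart domains `Π_p` of the projection lattice:
for projections p, q in a unital C*-algebra, p·q is invertible from the corner
of q to the corner of p iff A = q·A ⊕ (1−p)·A. -/
theorem stmt3 {A : Type*} [NormedRing A] [StarRing A] [CStarRing A]
    [NormedAlgebra ℂ A] [StarModule ℂ A] [CompleteSpace A]
    (p q : A) (hp₁ : star p = p) (hp₂ : p * p = p)
    (hq₁ : star q = q) (hq₂ : q * q = q) :
    (∃ x : A, p * q * x = p ∧ x * (p * q) = q) ↔
    ((∀ a : A, ∃ b c : A, a = q * b + (1 - p) * c) ∧
      (∀ a : A, q * a = a → p * a = 0 → a = 0)) := by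
  constructor
  · rintro ⟨x, hx1, hx2⟩
    constructor
    · intro a
      refine ⟨x * p * a, a - q * x * p * a, ?_⟩
      have hpc : p * (a - q * x * p * a) = 0 := by
        have h : p * (q * x * p * a) = p * a := by
          calc p * (q * x * p * a) = (p * q * x) * (p * a) := by noncomm_ring
            _ = p * (p * a) := by rw [hx1]
            _ = p * a := by rw [← mul_assoc, hp₂]
        rw [mul_sub, h, sub_self]
      have h1 : (1 - p) * (a - q * x * p * a) = a - q * x * p * a := by
        rw [sub_mul, one_mul, hpc, sub_zero]
      rw [h1]
      noncomm_ring
    · intro a hqa hpa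
      have h : a = x * (p * q) * a := by rw [hx2, hqa]
      calc a = x * (p * q) * a := h
        _ = x * (p * (q * a)) := by rw [mul_assoc, mul_assoc]
        _ = x * (p * a) := by rw [hqa]
        _ = 0 := by rw [hpa, mul_zero]
  · rintro ⟨hsurj, hinj⟩
    obtain ⟨b, c, hb⟩ := hsurj p
    have hpqb : p * q * b = p := by
      have h := congrArg (fun z => p * z) hb
      simp only [mul_add] at h
      have hp1p : p * ((1 - p) * c) = 0 := by
        rw [← mul_assoc, mul_one_sub, hp₂, sub_self, zero_mul]
      rw [hp1p, add_zero, hp₂] at h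
      rw [mul_assoc, ← h]
    refine ⟨q * b, ?_, ?_⟩
    · calc p * q * (q * b) = p * (q * q) * b := by noncomm_ring
        _ = p := by rw [hq₂]; exact hpqb
    · have hqa : q * (q - q * b * (p * q)) = q - q * b * (p * q) := by
        rw [mul_sub]
        rw [show q * (q * b * (p * q)) = (q * q) * b * (p * q) from by noncomm_ring, hq₂]
      have hpa : p * (q - q * b * (p * q)) = 0 := by
        rw [mul_sub, show p * (q * b * (p * q)) = (p * q * b) * (p * q) from by noncomm_ring,
          hpqb, show p * (p * q) = (p * p) * q from by noncomm_ring, hp₂, sub_self]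
      have h := hinj _ hqa hpa
      exact (sub_eq_zero.mp h).symm
end

section
/- Let M be a von Neumann algebra on a complex Hilbert space H and let γ₁, γ₂ ∈ H satisfy ⟪γ₁, x γ₁⟫ = ⟪γ₂, x γ₂⟫ for every x ∈ M (equality of the vector functionals E(γ₁) = E(γ₂) on M). Let P₁ and P₂ be the orthogonal projections of H onto the closures of the subspaces {x γ₁ : x ∈ M} and {x γ₂ : x ∈ M}, respectively. Then there exists a unique bounded operator u ∈ M' (the commutant of M) such that u γ₁ = γ₂ and u* ∘ u = P₁; moreover, this u is a partial isometry with u ∘ u* = P₂. -/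
/-!
For `x ∈ M` we have `‖x γ₁‖² = ⟪γ₁, x⋆x γ₁⟫ = ‖x γ₂‖²`, so `x γ₁ ↦ x γ₂` is a well-defined
isometry from `M γ₁` onto `M γ₂`. Extending it to the closure `[M γ₁]` and precomposing with the
orthogonal projection onto `[M γ₁]` gives a partial isometry `u` with initial projection `[M γ₁]`
and final projection `[M γ₂]`. It commutes with `M` on `[M γ₁]` by construction, and it kills
`[M γ₁]ᗮ`, which is `M`-invariant because `M` is closed under adjoints. Any `v ∈ M'` with
`v γ₁ = γ₂` agrees with `u` on `M γ₁`, while `v⋆v = [M γ₁]` forces `v` to vanish on `[M γ₁]ᗮ`;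
hence `v = u`.
-/

open ContinuousLinearMap Submodule
open scoped InnerProductSpace InnerProduct

section Hilbert

variable {𝕜 H G : Type*} [RCLike 𝕜]
  [NormedAddCommGroup H] [InnerProductSpace 𝕜 H]
  [NormedAddCommGroup G] [InnerProductSpace 𝕜 G]

theorem Submodule.starProjection_eq_of_forall_mem_orthogonal {K : Submodule 𝕜 H}
    [K.HasOrthogonalProjection] {P : H →L[𝕜] H} (hP : ∀ ξ, P ξ ∈ K ∧ ξ - P ξ ∈ Kᗮ) :
    K.starProjection = P :=
  ContinuousLinearMap.ext fun ξ => eq_starProjection_of_mem_orthogonal (hP ξ).1 (hP ξ).2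

theorem ContinuousLinearMap.ext_of_eqOn_of_eqOn_orthogonal (K : Submodule 𝕜 H)
    [K.HasOrthogonalProjection] {A B : H →L[𝕜] G} (hK : Set.EqOn A B K)
    (hKo : Set.EqOn A B Kᗮ) : A = B := by
  ext ξ
  rw [← add_sub_cancel (K.starProjection ξ) ξ, map_add, map_add,
    hK (K.starProjection_apply_mem ξ), hKo (K.sub_starProjection_mem_orthogonal ξ)]

theorem LinearIsometry.comp_adjoint_eq_starProjection {F : Type*} [NormedAddCommGroup F]
    [InnerProductSpace 𝕜 F] [CompleteSpace F] [CompleteSpace G] (V : F →ₗᵢ[𝕜] G) :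
    V.toContinuousLinearMap ∘L V.toContinuousLinearMap† =
      (LinearMap.range V.toLinearMap).topologicalClosure.starProjection := by
  refine (starProjection_eq_of_forall_mem_orthogonal fun ξ => ⟨?_, ?_⟩).symm
  · exact le_topologicalClosure _ (LinearMap.mem_range_self _ _)
  · rw [orthogonal_closure, mem_orthogonal]
    rintro _ ⟨k, rfl⟩
    change ⟪V k, ξ - V (adjoint V.toContinuousLinearMap ξ)⟫_𝕜 = 0
    rw [inner_sub_right, V.inner_map_map, ← V.coe_toContinuousLinearMap, adjoint_inner_right,
      sub_self]

variable [CompleteSpace H] [CompleteSpace G]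

theorem ContinuousLinearMap.apply_eq_zero_of_adjoint_comp_self_eq {K : Submodule 𝕜 H}
    [K.HasOrthogonalProjection] {A : H →L[𝕜] G} (hA : A† ∘L A = K.starProjection)
    {ζ : H} (hζ : ζ ∈ Kᗮ) : A ζ = 0 := by
  have h : ⟪A ζ, A ζ⟫_𝕜 = ⟪ζ, K.starProjection ζ⟫_𝕜 := by
    rw [← hA, comp_apply, adjoint_inner_right]
  rwa [K.starProjection_apply_eq_zero_iff.mpr hζ, inner_zero_right, inner_self_eq_zero] at h

theorem ContinuousLinearMap.eq_of_adjoint_comp_self_eq {W : Submodule 𝕜 H} {A B : H →L[𝕜] G}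
    (hA : A† ∘L A = W.topologicalClosure.starProjection)
    (hB : B† ∘L B = W.topologicalClosure.starProjection) (hAB : Set.EqOn A B W) :
    A = B := by
  refine ext_of_eqOn_of_eqOn_orthogonal W.topologicalClosure ?_ fun ζ hζ => ?_
  · rw [topologicalClosure_coe]
    exact hAB.closure A.continuous B.continuous
  · rw [apply_eq_zero_of_adjoint_comp_self_eq hA hζ, apply_eq_zero_of_adjoint_comp_self_eq hB hζ]

end Hilbert

noncomputable section

namespace LinearMap

variable {𝕜 E H G : Type*} [RCLike 𝕜] [AddCommGroup E] [Module 𝕜 E]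
  [NormedAddCommGroup H] [InnerProductSpace 𝕜 H]
  [NormedAddCommGroup G] [InnerProductSpace 𝕜 G]
  (f : E →ₗ[𝕜] H) (g : E →ₗ[𝕜] G)

def toRangeClosure : E →ₗ[𝕜] (range f).topologicalClosure :=
  f.codRestrict _ fun x => le_topologicalClosure _ (mem_range_self f x)

@[simp]
theorem coe_toRangeClosure (x : E) : (f.toRangeClosure x : H) = f x := rfl

theorem denseRange_toRangeClosure : DenseRange f.toRangeClosure := by
  rw [DenseRange, Subtype.dense_iff, ← Set.range_comp]
  exact (range f).topologicalClosure_coe.subset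

theorem exists_norm_le_toRangeClosure (hfg : ∀ x, ‖g x‖ = ‖f x‖) :
    ∃ C, ∀ x, ‖g x‖ ≤ C * ‖f.toRangeClosure x‖ :=
  ⟨1, fun x => by simp [hfg]⟩

variable [CompleteSpace G] (hfg : ∀ x, ‖g x‖ = ‖f x‖)

def isometryOfNormEq : (range f).topologicalClosure →ₗᵢ[𝕜] G where
  toLinearMap := g.extendOfNorm f.toRangeClosure
  norm_map' k := by
    refine f.denseRange_toRangeClosure.induction_on k
      (isClosed_eq (by fun_prop) continuous_norm) fun x => ?_
    rw [ContinuousLinearMap.coe_coe,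
      extendOfNorm_eq f.denseRange_toRangeClosure (f.exists_norm_le_toRangeClosure g hfg), hfg]
    rfl

theorem isometryOfNormEq_toRangeClosure (x : E) :
    f.isometryOfNormEq g hfg (f.toRangeClosure x) = g x :=
  extendOfNorm_eq f.denseRange_toRangeClosure (f.exists_norm_le_toRangeClosure g hfg) x

theorem topologicalClosure_range_isometryOfNormEq :
    (range (f.isometryOfNormEq g hfg).toLinearMap).topologicalClosure =
      (range g).topologicalClosure := by
  refine le_antisymm (topologicalClosure_minimal _ ?_ (isClosed_topologicalClosure _))
    (topologicalClosure_mono ?_)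
  · rintro _ ⟨k, rfl⟩
    refine f.denseRange_toRangeClosure.induction_on k
      ((isClosed_topologicalClosure _).preimage (f.isometryOfNormEq g hfg).continuous) fun x => ?_
    change f.isometryOfNormEq g hfg _ ∈ _
    rw [isometryOfNormEq_toRangeClosure]
    exact le_topologicalClosure _ (mem_range_self g x)
  · rintro _ ⟨x, rfl⟩
    exact ⟨f.toRangeClosure x, f.isometryOfNormEq_toRangeClosure g hfg x⟩

variable [CompleteSpace H]

def partialIsometryOfNormEq : H →L[𝕜] G :=
  (f.isometryOfNormEq g hfg).toContinuousLinearMap ∘L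
    (range f).topologicalClosure.orthogonalProjectionOnto

theorem partialIsometryOfNormEq_apply (x : E) : f.partialIsometryOfNormEq g hfg (f x) = g x := by
  rw [partialIsometryOfNormEq, ContinuousLinearMap.comp_apply, ← f.coe_toRangeClosure,
    orthogonalProjectionOnto_mem_subspace_eq_self]
  exact f.isometryOfNormEq_toRangeClosure g hfg x

theorem adjoint_comp_partialIsometryOfNormEq :
    (f.partialIsometryOfNormEq g hfg)† ∘L f.partialIsometryOfNormEq g hfg =
      (range f).topologicalClosure.starProjection := by
  rw [partialIsometryOfNormEq, ContinuousLinearMap.adjoint_comp,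
    adjoint_orthogonalProjectionOnto, ContinuousLinearMap.comp_assoc,
    ← ContinuousLinearMap.comp_assoc _ _ (orthogonalProjectionOnto _),
    LinearIsometry.adjoint_comp_self, ContinuousLinearMap.one_def, ContinuousLinearMap.id_comp]
  rfl

theorem partialIsometryOfNormEq_comp_adjoint :
    f.partialIsometryOfNormEq g hfg ∘L (f.partialIsometryOfNormEq g hfg)† =
      (range g).topologicalClosure.starProjection := by
  have hPι : (range f).topologicalClosure.orthogonalProjectionOnto ∘L
      (range f).topologicalClosure.subtypeL = .id 𝕜 _ :=
    ContinuousLinearMap.ext orthogonalProjectionOnto_mem_subspace_eq_self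
  rw [partialIsometryOfNormEq, ContinuousLinearMap.adjoint_comp,
    adjoint_orthogonalProjectionOnto, ContinuousLinearMap.comp_assoc,
    ← ContinuousLinearMap.comp_assoc _ _ (ContinuousLinearMap.adjoint _), hPι,
    ContinuousLinearMap.id_comp, LinearIsometry.comp_adjoint_eq_starProjection]
  simp only [topologicalClosure_range_isometryOfNormEq]

end LinearMap

namespace VonNeumannAlgebra

variable {H : Type*} [NormedAddCommGroup H] [InnerProductSpace ℂ H] [CompleteSpace H]
  (M : VonNeumannAlgebra H)

def orbitMap (γ : H) : M.toStarSubalgebra →ₗ[ℂ] H :=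
  (ContinuousLinearMap.apply ℂ H γ : (H →L[ℂ] H) →ₗ[ℂ] H) ∘ₗ
    M.toStarSubalgebra.subtype.toLinearMap

@[simp]
theorem orbitMap_apply (γ : H) (x : M.toStarSubalgebra) :
    M.orbitMap γ x = (x : H →L[ℂ] H) γ := rfl

theorem apply_orbitMap (γ : H) (y x : M.toStarSubalgebra) :
    (y : H →L[ℂ] H) (M.orbitMap γ x) = M.orbitMap γ (y * x) := rfl

theorem span_setOf_eq_range_orbitMap (γ : H) :
    span ℂ {v : H | ∃ x : H →L[ℂ] H, x ∈ M ∧ v = x γ} = LinearMap.range (M.orbitMap γ) := by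
  refine le_antisymm (span_le.2 ?_) fun _ ⟨x, hx⟩ => subset_span ⟨x, x.2, hx.symm⟩
  rintro _ ⟨x, hx, rfl⟩
  exact ⟨⟨x, hx⟩, rfl⟩

theorem apply_mem_orthogonal_range_orbitMap {y : H →L[ℂ] H} (hy : y ∈ M) {γ ζ : H}
    (hζ : ζ ∈ (LinearMap.range (M.orbitMap γ))ᗮ) : y ζ ∈ (LinearMap.range (M.orbitMap γ))ᗮ := by
  rintro _ ⟨x, rfl⟩
  rw [orbitMap_apply, ← adjoint_inner_left, ← mul_apply_eq_comp, ← star_eq_adjoint]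
  exact hζ _ ⟨⟨star y * x, mul_mem (star_mem hy) x.2⟩, rfl⟩

variable {M} {γ₁ γ₂ : H}

theorem norm_orbitMap_eq (hE : ∀ x : H →L[ℂ] H, x ∈ M → ⟪γ₁, x γ₁⟫_ℂ = ⟪γ₂, x γ₂⟫_ℂ)
    (x : M.toStarSubalgebra) : ‖M.orbitMap γ₂ x‖ = ‖M.orbitMap γ₁ x‖ := by
  have h (γ : H) : ⟪M.orbitMap γ x, M.orbitMap γ x⟫_ℂ = ⟪γ, M.orbitMap γ (star x * x)⟫_ℂ := by
    rw [orbitMap_apply, orbitMap_apply, MulMemClass.coe_mul, StarMemClass.coe_star,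
      mul_apply_eq_comp, star_eq_adjoint, adjoint_inner_right]
  rw [norm_eq_sqrt_re_inner (𝕜 := ℂ), norm_eq_sqrt_re_inner (𝕜 := ℂ), h, h, orbitMap_apply,
    orbitMap_apply, hE _ (star x * x).2]

theorem apply_orbitMap_of_mem_commutant {v : H →L[ℂ] H} (hv : v ∈ M.commutant)
    (hvγ : v γ₁ = γ₂) (x : M.toStarSubalgebra) : v (M.orbitMap γ₁ x) = M.orbitMap γ₂ x := by
  rw [orbitMap_apply, orbitMap_apply, ← mul_apply_eq_comp, ← mem_commutant_iff.1 hv _ x.2,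
    mul_apply_eq_comp, hvγ]

variable (hE : ∀ x : H →L[ℂ] H, x ∈ M → ⟪γ₁, x γ₁⟫_ℂ = ⟪γ₂, x γ₂⟫_ℂ)

def intertwiner : H →L[ℂ] H :=
  (M.orbitMap γ₁).partialIsometryOfNormEq (M.orbitMap γ₂) (norm_orbitMap_eq hE)

theorem intertwiner_orbitMap (x : M.toStarSubalgebra) :
    intertwiner hE (M.orbitMap γ₁ x) = M.orbitMap γ₂ x :=
  LinearMap.partialIsometryOfNormEq_apply _ _ _ x

theorem adjoint_comp_intertwiner :
    (intertwiner hE)† ∘L intertwiner hE =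
      (LinearMap.range (M.orbitMap γ₁)).topologicalClosure.starProjection :=
  LinearMap.adjoint_comp_partialIsometryOfNormEq _ _ _

theorem intertwiner_comp_adjoint :
    intertwiner hE ∘L (intertwiner hE)† =
      (LinearMap.range (M.orbitMap γ₂)).topologicalClosure.starProjection :=
  LinearMap.partialIsometryOfNormEq_comp_adjoint _ _ _

theorem intertwiner_mem_commutant : intertwiner hE ∈ M.commutant := by
  refine mem_commutant_iff.2 fun y hy => ?_
  refine ext_of_eqOn_of_eqOn_orthogonal (LinearMap.range (M.orbitMap γ₁)).topologicalClosure ?_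
    fun ζ hζ => ?_
  · rw [topologicalClosure_coe]
    refine Set.EqOn.closure ?_ (by fun_prop) (by fun_prop)
    rintro _ ⟨x, rfl⟩
    rw [mul_apply_eq_comp, mul_apply_eq_comp, intertwiner_orbitMap,
      apply_orbitMap (y := ⟨y, hy⟩), apply_orbitMap (y := ⟨y, hy⟩), intertwiner_orbitMap]
  · have hyζ : y ζ ∈ (LinearMap.range (M.orbitMap γ₁)).topologicalClosureᗮ := by
      rw [orthogonal_closure] at hζ ⊢
      exact M.apply_mem_orthogonal_range_orbitMap hy hζ
    rw [mul_apply_eq_comp, mul_apply_eq_comp,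
      apply_eq_zero_of_adjoint_comp_self_eq (adjoint_comp_intertwiner hE) hζ,
      apply_eq_zero_of_adjoint_comp_self_eq (adjoint_comp_intertwiner hE) hyζ, map_zero]

theorem eq_intertwiner_of_mem_commutant {v : H →L[ℂ] H} (hv : v ∈ M.commutant)
    (hvγ : v γ₁ = γ₂)
    (hvP : v† ∘L v = (LinearMap.range (M.orbitMap γ₁)).topologicalClosure.starProjection) :
    v = intertwiner hE :=
  eq_of_adjoint_comp_self_eq hvP (adjoint_comp_intertwiner hE) fun _ ⟨x, hx⟩ => by
    rw [← hx, apply_orbitMap_of_mem_commutant hv hvγ, intertwiner_orbitMap]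

end VonNeumannAlgebra

end

open VonNeumannAlgebra

/-- If two vectors define the same vector functional on a von Neumann algebra M,
then there is a unique partial isometry u in the commutant M' with u γ₁ = γ₂ and
u* u = [Mγ₁]; moreover u u* = [Mγ₂] (Proposition 4.6). -/
theorem stmt5 {H : Type*} [NormedAddCommGroup H] [InnerProductSpace ℂ H]
    [CompleteSpace H]
    (M : VonNeumannAlgebra H) (γ₁ γ₂ : H)
    (hE : ∀ x : H →L[ℂ] H, x ∈ M → (inner ℂ γ₁ (x γ₁) : ℂ) = inner ℂ γ₂ (x γ₂))
    (K₁ K₂ : Submodule ℂ H)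
    (hK₁ : K₁ = (Submodule.span ℂ
      {v : H | ∃ x : H →L[ℂ] H, x ∈ M ∧ v = x γ₁}).topologicalClosure)
    (hK₂ : K₂ = (Submodule.span ℂ
      {v : H | ∃ x : H →L[ℂ] H, x ∈ M ∧ v = x γ₂}).topologicalClosure)
    (P₁ P₂ : H →L[ℂ] H)
    (hP₁ : ∀ ξ : H, P₁ ξ ∈ K₁ ∧ ξ - P₁ ξ ∈ K₁ᗮ)
    (hP₂ : ∀ ξ : H, P₂ ξ ∈ K₂ ∧ ξ - P₂ ξ ∈ K₂ᗮ) :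
    (∃! u : H →L[ℂ] H, u ∈ M.commutant ∧ u γ₁ = γ₂ ∧
        ContinuousLinearMap.adjoint u ∘L u = P₁) ∧
    (∀ u : H →L[ℂ] H, u ∈ M.commutant → u γ₁ = γ₂ →
        ContinuousLinearMap.adjoint u ∘L u = P₁ →
        u ∘L ContinuousLinearMap.adjoint u = P₂) := by
  rw [span_setOf_eq_range_orbitMap] at hK₁ hK₂
  subst hK₁ hK₂
  obtain rfl := starProjection_eq_of_forall_mem_orthogonal hP₁
  obtain rfl := starProjection_eq_of_forall_mem_orthogonal hP₂
  have hu : intertwiner hE γ₁ = γ₂ := by simpa using intertwiner_orbitMap hE 1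
  refine ⟨⟨intertwiner hE, ⟨intertwiner_mem_commutant hE, hu, adjoint_comp_intertwiner hE⟩,
    fun v ⟨hv, hvγ, hvP⟩ => eq_intertwiner_of_mem_commutant hE hv hvγ hvP⟩, ?_⟩
  intro v hv hvγ hvP
  rw [eq_intertwiner_of_mem_commutant hE hv hvγ hvP]
  exact intertwiner_comp_adjoint hE
end

section
/- Let M be a von Neumann algebra on a complex Hilbert space H, let γ₀ ∈ H, and let p₀ : H →L[ℂ] H be the orthogonal projection onto the closure of the subspace {x' γ₀ : x' ∈ M'}, where M' is the commutant of M. If v ∈ M satisfies v γ₀ = 0 and v ∘ p₀ = v, then v = 0. (This is the injectivity of the tangent maps of the map u ↦ u γ₀, i.e., the weak-immersion property of Proposition 4.9.) -/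
/-- Weak-immersion property (Proposition 4.9): if v ∈ M kills γ₀ and
v ∘ p₀ = v, where p₀ = [M'γ₀], then v = 0. -/
theorem stmt6 {H : Type*} [NormedAddCommGroup H] [InnerProductSpace ℂ H]
    [CompleteSpace H]
    (M : VonNeumannAlgebra H) (γ₀ : H)
    (K : Submodule ℂ H)
    (hK : K = (Submodule.span ℂ
      {w : H | ∃ x' : H →L[ℂ] H, x' ∈ M.commutant ∧ w = x' γ₀}).topologicalClosure)
    (p₀ : H →L[ℂ] H)
    (hp₀ : ∀ ξ : H, p₀ ξ ∈ K ∧ ξ - p₀ ξ ∈ Kᗮ)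
    (v : H →L[ℂ] H) (hv : v ∈ M) (hv0 : v γ₀ = 0) (hvp : v ∘L p₀ = v) :
    v = 0 := by
  have hker : ∀ w ∈ K, v w = 0 := by
    intro w hw
    rw [hK] at hw
    have hle : Submodule.span ℂ
        {w : H | ∃ x' : H →L[ℂ] H, x' ∈ M.commutant ∧ w = x' γ₀} ≤
        LinearMap.ker (v : H →ₗ[ℂ] H) := by
      rw [Submodule.span_le]
      rintro w ⟨x', hx', rfl⟩
      have hcomm := (VonNeumannAlgebra.mem_commutant_iff.mp hx') v hv
      have hvx : v (x' γ₀) = x' (v γ₀) := by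
        have := congrArg (fun f : H →L[ℂ] H => f γ₀) hcomm
        simpa using this
      simp [LinearMap.mem_ker, hvx, hv0]
    have hclosed : IsClosed ((LinearMap.ker (v : H →ₗ[ℂ] H) : Submodule ℂ H) : Set H) :=
      ContinuousLinearMap.isClosed_ker v
    have := Submodule.topologicalClosure_minimal _ hle hclosed hw
    exact this
  ext ξ
  have : v ξ = v (p₀ ξ) := by
    conv_lhs => rw [← hvp]
    rfl
  rw [ContinuousLinearMap.zero_apply, this, hker _ (hp₀ ξ).1]
end

section
/- Let M be a von Neumann algebra on a complex Hilbert space H with commutant M', and let γ ∈ H. Let p be the orthogonal projection of H onto the closure of {x' γ : x' ∈ M'} and p' the orthogonal projection onto the closure of {x γ : x ∈ M}. Suppose a ∈ M' and b ∈ M satisfy (p' ∘ a ∘ p')* = −(p' ∘ a ∘ p') and (p ∘ b ∘ p)* = −(p ∘ b ∘ p). Then the imaginary part of ⟪a γ, b γ⟫ vanishes. (This is the symplectic orthogonality of the tangent spaces to the fibres of the expectation maps E and E' through γ, Proposition 4.10.) -/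
/-!
Both compressions `A = p' a p'` and `B = p b p` are skew-adjoint, and they commute because
`A ∈ M'` and `B ∈ M` (the projections `p ∈ M`, `p' ∈ M'` project onto subspaces invariant under
`M'` and `M` respectively). Hence `⟪Aγ, Bγ⟫ = -⟪γ, ABγ⟫ = -⟪γ, BAγ⟫ = ⟪Bγ, Aγ⟫` is real. Since
`γ`, `aγ` lie in the range of `p` and `γ`, `bγ` in the range of `p'`, compressing does not change
the inner product: `⟪Aγ, Bγ⟫ = ⟪aγ, bγ⟫`.
-/

section

open ContinuousLinearMap

variable {H : Type*} [NormedAddCommGroup H] [InnerProductSpace ℂ H]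

theorem Submodule.eq_starProjection_of_forall_mem_orthogonal {K : Submodule ℂ H}
    [K.HasOrthogonalProjection] {p : H →L[ℂ] H} (hp : ∀ ξ, p ξ ∈ K ∧ ξ - p ξ ∈ Kᗮ) :
    p = K.starProjection :=
  ContinuousLinearMap.ext fun ξ ↦ (K.eq_starProjection_of_mem_orthogonal (hp ξ).1 (hp ξ).2).symm

variable [CompleteSpace H]

theorem im_inner_eq_zero_of_commute_of_adjoint_eq_neg {A B : H →L[ℂ] H}
    (hA : adjoint A = -A) (hB : adjoint B = -B) (γ : H) (hAB : Commute A B) :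
    (inner ℂ (A γ) (B γ)).im = 0 := by
  have hsymm : inner ℂ (A γ) (B γ) = inner ℂ (B γ) (A γ) :=
    calc inner ℂ (A γ) (B γ)
        = inner ℂ γ (adjoint A (B γ)) := (adjoint_inner_right A γ (B γ)).symm
      _ = -inner ℂ γ (A (B γ)) := by rw [hA, neg_apply, inner_neg_right]
      _ = -inner ℂ γ (B (A γ)) := congrArg (fun T ↦ -inner ℂ γ (T γ)) hAB.eq
      _ = -inner ℂ (adjoint B γ) (A γ) := by rw [adjoint_inner_left]
      _ = inner ℂ (B γ) (A γ) := by rw [hB, neg_apply, inner_neg_left, neg_neg]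
  rw [← Complex.conj_eq_iff_im, inner_conj_symm, hsymm]

theorem inner_compress_apply_eq {p p' a b : H →L[ℂ] H} (hp : IsSelfAdjoint p)
    (hp' : IsSelfAdjoint p') (hpp' : Commute p p') {γ : H} (hpγ : p γ = γ) (hp'γ : p' γ = γ)
    (hpa : p (a γ) = a γ) (hp'b : p' (b γ) = b γ) :
    inner ℂ ((p' ∘L a ∘L p') γ) ((p ∘L b ∘L p) γ) = inner ℂ (a γ) (b γ) :=
  calc inner ℂ ((p' ∘L a ∘L p') γ) ((p ∘L b ∘L p) γ)
      = inner ℂ (p (p' (a γ))) (b γ) := by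
        rw [comp_apply, comp_apply, comp_apply, comp_apply, hpγ, hp'γ, ← adjoint_inner_left,
          hp.adjoint_eq]
    _ = inner ℂ (p' (a γ)) (b γ) := by
        rw [← mul_apply_eq_comp, hpp'.eq, mul_apply_eq_comp, hpa]
    _ = inner ℂ (a γ) (b γ) := by rw [← adjoint_inner_right, hp'.adjoint_eq, hp'b]

namespace VonNeumannAlgebra

def cyclicSubspace (S : VonNeumannAlgebra H) (γ : H) : Submodule ℂ H :=
  (Submodule.span ℂ {v : H | ∃ x : H →L[ℂ] H, x ∈ S ∧ v = x γ}).topologicalClosure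

variable (S : VonNeumannAlgebra H) (γ : H)

instance : (S.cyclicSubspace γ).HasOrthogonalProjection := by
  unfold cyclicSubspace; infer_instance

theorem apply_mem_cyclicSubspace {x : H →L[ℂ] H} (hx : x ∈ S) : x γ ∈ S.cyclicSubspace γ :=
  Submodule.le_topologicalClosure _ (Submodule.subset_span ⟨x, hx, rfl⟩)

theorem self_mem_cyclicSubspace : γ ∈ S.cyclicSubspace γ :=
  S.apply_mem_cyclicSubspace γ (one_mem S)

theorem cyclicSubspace_mem_invtSubmodule {y : H →L[ℂ] H} (hy : y ∈ S) :
    S.cyclicSubspace γ ∈ Module.End.invtSubmodule y.toLinearMap := by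
  refine Submodule.topologicalClosure_mem_invtSubmodule ?_
  rw [Module.End.mem_invtSubmodule, Submodule.span_le]
  rintro _ ⟨x, hx, rfl⟩
  exact Submodule.subset_span ⟨y * x, mul_mem hy hx, rfl⟩

theorem starProjection_cyclicSubspace_mem_commutant :
    (S.cyclicSubspace γ).starProjection ∈ S.commutant := by
  rw [IsStarProjection.mem_iff isStarProjection_starProjection, commutant_commutant,
    Submodule.range_starProjection]
  exact fun y hy ↦ S.cyclicSubspace_mem_invtSubmodule γ hy

end VonNeumannAlgebra

end

/-- Symplectic orthogonality of the tangent spaces to the fibres of the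
expectation maps E and E' through γ (Proposition 4.10). -/
theorem stmt7 {H : Type*} [NormedAddCommGroup H] [InnerProductSpace ℂ H]
    [CompleteSpace H]
    (M : VonNeumannAlgebra H) (γ : H)
    (K K' : Submodule ℂ H)
    (hK : K = (Submodule.span ℂ
      {v : H | ∃ x' : H →L[ℂ] H, x' ∈ M.commutant ∧ v = x' γ}).topologicalClosure)
    (hK' : K' = (Submodule.span ℂ
      {v : H | ∃ x : H →L[ℂ] H, x ∈ M ∧ v = x γ}).topologicalClosure)
    (p p' : H →L[ℂ] H)
    (hp : ∀ ξ : H, p ξ ∈ K ∧ ξ - p ξ ∈ Kᗮ)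
    (hp' : ∀ ξ : H, p' ξ ∈ K' ∧ ξ - p' ξ ∈ K'ᗮ)
    (a b : H →L[ℂ] H) (ha : a ∈ M.commutant) (hb : b ∈ M)
    (haSkew : ContinuousLinearMap.adjoint (p' ∘L a ∘L p') = -(p' ∘L a ∘L p'))
    (hbSkew : ContinuousLinearMap.adjoint (p ∘L b ∘L p) = -(p ∘L b ∘L p)) :
    (inner ℂ (a γ) (b γ) : ℂ).im = 0 := by
  change K = M.commutant.cyclicSubspace γ at hK
  change K' = M.cyclicSubspace γ at hK'
  subst hK hK'
  obtain rfl := Submodule.eq_starProjection_of_forall_mem_orthogonal hp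
  obtain rfl := Submodule.eq_starProjection_of_forall_mem_orthogonal hp'
  have hpM : (M.commutant.cyclicSubspace γ).starProjection ∈ M := by
    simpa using M.commutant.starProjection_cyclicSubspace_mem_commutant γ
  have hp'M' := M.starProjection_cyclicSubspace_mem_commutant γ
  rw [← inner_compress_apply_eq (isSelfAdjoint_starProjection _) (isSelfAdjoint_starProjection _)
    (VonNeumannAlgebra.mem_commutant_iff.mp hp'M' _ hpM)
    (Submodule.starProjection_eq_self_iff.mpr (M.commutant.self_mem_cyclicSubspace γ))
    (Submodule.starProjection_eq_self_iff.mpr (M.self_mem_cyclicSubspace γ))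
    (Submodule.starProjection_eq_self_iff.mpr (M.commutant.apply_mem_cyclicSubspace γ ha))
    (Submodule.starProjection_eq_self_iff.mpr (M.apply_mem_cyclicSubspace γ hb))]
  refine im_inner_eq_zero_of_commute_of_adjoint_eq_neg haSkew hbSkew γ ?_
  exact (VonNeumannAlgebra.mem_commutant_iff.mp (mul_mem hp'M' (mul_mem ha hp'M')) _
    (mul_mem hpM (mul_mem hb hpM))).symm
end

section
/- Let M be a von Neumann algebra on a complex Hilbert space H, let J be a conjugation of H with J γ₀ = γ₀ for a fixed γ₀ ∈ H, and assume J M J ⊆ M' (i.e., j(a) ∈ M' for every a ∈ M). Let u ∈ M satisfy ((star u) ∘ u) γ₀ = γ₀. Then the vectors u(J(u γ₀)) and u γ₀ define the same vector functional on M: for every x ∈ M, ⟪u(J(u γ₀)), x (u(J(u γ₀)))⟫ = ⟪u γ₀, x (u γ₀)⟫. (Lemma 6.6(i): E(u·j(u)·γ₀) = E(u γ₀).) -/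
/-!
Since `j u ∈ M'` commutes with `u` and with `x`, and the adjoint of `j u` is `j (star u)`
(a conjugation is antiunitary), we get
`⟪u (j u γ₀), x (u (j u γ₀))⟫ = ⟪u γ₀, x (u (j (star u) (j u γ₀)))⟫`,
and `j (star u) (j u γ₀) = J ((star u * u) γ₀) = γ₀`.
-/

section

variable {H : Type*} [NormedAddCommGroup H] [InnerProductSpace ℂ H]

theorem LinearIsometry.inner_map_map_antilinear (J : H →ₗᵢ⋆[ℂ] H) (x y : H) :
    inner ℂ (J x) (J y) = inner ℂ y x := by
  have hre : ∀ x y : H, RCLike.re (inner ℂ (J x) (J y)) = RCLike.re (inner ℂ x y) := by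
    intro x y
    simp only [re_inner_eq_norm_add_mul_self_sub_norm_mul_self_sub_norm_mul_self_div_two,
      ← map_add, J.norm_map]
  have him : (inner ℂ (J x) (J y)).im = -(inner ℂ x y).im := by
    simpa [map_smulₛₗ, inner_smul_right] using hre x (Complex.I • y)
  rw [← inner_conj_symm y x]
  exact Complex.ext (by rw [Complex.conj_re]; simpa using hre x y) (by rw [him, Complex.conj_im])

theorem LinearIsometry.inner_conj_apply_conj_left [CompleteSpace H] (J : H →ₗᵢ⋆[ℂ] H)
    (hJ : ∀ ξ, J (J ξ) = ξ) (a : H →L[ℂ] H) (ξ η : H) :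
    inner ℂ (J (a (J ξ))) η = inner ℂ ξ (J (star a (J η))) :=
  calc inner ℂ (J (a (J ξ))) η
      = inner ℂ (J (a (J ξ))) (J (J η)) := by rw [hJ]
    _ = inner ℂ (J η) (a (J ξ)) := J.inner_map_map_antilinear _ _
    _ = inner ℂ (star a (J η)) (J ξ) := by
        rw [ContinuousLinearMap.star_eq_adjoint, ContinuousLinearMap.adjoint_inner_left]
    _ = inner ℂ (J (J ξ)) (J (star a (J η))) := (J.inner_map_map_antilinear _ _).symm
    _ = inner ℂ ξ (J (star a (J η))) := by rw [hJ]

theorem VonNeumannAlgebra.apply_apply_comm_of_mem_commutant [CompleteSpace H]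
    {M : VonNeumannAlgebra H} {a z : H →L[ℂ] H} (hz : z ∈ M.commutant) (ha : a ∈ M) (ξ : H) :
    a (z ξ) = z (a ξ) :=
  congrArg (· ξ) (VonNeumannAlgebra.mem_commutant_iff.mp hz a ha)

end

/-- Lemma 6.6(i): E(u·j(u)·γ₀) = E(u γ₀) on M, for u ∈ M with (u*u)γ₀ = γ₀,
where J is a conjugation fixing γ₀ and j(a) = J a J ∈ M' for a ∈ M. -/
theorem stmt11 {H : Type*} [NormedAddCommGroup H] [InnerProductSpace ℂ H]
    [CompleteSpace H]
    (M : VonNeumannAlgebra H) (γ₀ : H) (J : H → H)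
    (hJadd : ∀ ξ η : H, J (ξ + η) = J ξ + J η)
    (hJsmul : ∀ (c : ℂ) (ξ : H), J (c • ξ) = (starRingEnd ℂ c) • J ξ)
    (hJnorm : ∀ ξ : H, ‖J ξ‖ = ‖ξ‖)
    (hJinv : ∀ ξ : H, J (J ξ) = ξ)
    (hJγ₀ : J γ₀ = γ₀)
    (j : (H →L[ℂ] H) → (H →L[ℂ] H))
    (hj : ∀ (a : H →L[ℂ] H) (ξ : H), j a ξ = J (a (J ξ)))
    (hjM : ∀ a : H →L[ℂ] H, a ∈ M → j a ∈ M.commutant)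
    (u : H →L[ℂ] H) (hu : u ∈ M)
    (huγ : (star u * u) γ₀ = γ₀) :
    ∀ x : H →L[ℂ] H, x ∈ M →
      (inner ℂ (u (J (u γ₀))) (x (u (J (u γ₀)))) : ℂ) =
        inner ℂ (u γ₀) (x (u γ₀)) := by
  intro x hx
  let J' : H →ₗᵢ⋆[ℂ] H := ⟨⟨⟨J, hJadd⟩, hJsmul⟩, hJnorm⟩
  have hj_star : ∀ (a : H →L[ℂ] H) (ξ η : H),
      inner ℂ (j a ξ) η = inner ℂ ξ (j (star a) η) := fun a ξ η => by
    rw [hj, hj]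
    exact J'.inner_conj_apply_conj_left hJinv a ξ η
  have hjuγ : j u γ₀ = J (u γ₀) := by rw [hj, hJγ₀]
  have hjuγ_inv : j (star u) (j u γ₀) = γ₀ := by
    rw [hjuγ, hj, hJinv, ← mul_apply_eq_comp, huγ, hJγ₀]
  have hv := hjM u hu
  have hw := hjM (star u) (star_mem hu)
  open VonNeumannAlgebra in
  calc inner ℂ (u (J (u γ₀))) (x (u (J (u γ₀))))
      = inner ℂ (j u (u γ₀)) (x (u (j u γ₀))) := by
        rw [← apply_apply_comm_of_mem_commutant hv hu, hjuγ]
    _ = inner ℂ (u γ₀) (j (star u) (x (u (j u γ₀)))) := hj_star u _ _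
    _ = inner ℂ (u γ₀) (x (u (j (star u) (j u γ₀)))) := by
        rw [apply_apply_comm_of_mem_commutant hw hu, apply_apply_comm_of_mem_commutant hw hx]
    _ = inner ℂ (u γ₀) (x (u γ₀)) := by rw [hjuγ_inv]
end

section
/- Let M be a von Neumann algebra on a complex Hilbert space H, let J be a conjugation of H with J γ₀ = γ₀ for a fixed γ₀ ∈ H, and assume J M J ⊆ M'. If a ∈ M satisfies J(a γ₀) = (star a) γ₀, then a commutes with the vector functional of γ₀: for every x ∈ M, ⟪γ₀, a (x γ₀)⟫ = ⟪γ₀, x (a γ₀)⟫. (Lemma 6.8(ii): j(a)γ₀ = a*γ₀ implies ρ₀ a = a ρ₀ for ρ₀ = E(γ₀).) -/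
open scoped InnerProductSpace

/-! Since `j(a*) ∈ M'` sends `γ₀` to `a γ₀`, we get `x a γ₀ = j(a*) x γ₀ = J a* J x γ₀`. An
antiunitary satisfies `⟪Jξ, Jη⟫ = ⟪η, ξ⟫`, so moving `J` and `a*` across the inner product twice
turns `⟪γ₀, J a* J x γ₀⟫` back into `⟪γ₀, a x γ₀⟫`. -/

namespace LinearIsometry

variable {𝕜 E F : Type*} [RCLike 𝕜] [SeminormedAddCommGroup E] [InnerProductSpace 𝕜 E]
  [SeminormedAddCommGroup F] [InnerProductSpace 𝕜 F]

theorem re_inner_map_map {σ : 𝕜 →+* 𝕜} (f : E →ₛₗᵢ[σ] F) (x y : E) :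
    RCLike.re ⟪f x, f y⟫_𝕜 = RCLike.re ⟪x, y⟫_𝕜 := by
  rw [re_inner_eq_norm_add_mul_self_sub_norm_mul_self_sub_norm_mul_self_div_two,
    re_inner_eq_norm_add_mul_self_sub_norm_mul_self_sub_norm_mul_self_div_two, ← map_add,
    f.norm_map, f.norm_map, f.norm_map]

theorem inner_map_map_of_starRingEnd (f : E →ₗᵢ⋆[𝕜] F) (x y : E) :
    ⟪f x, f y⟫_𝕜 = ⟪y, x⟫_𝕜 := by
  rw [← inner_conj_symm y x]
  refine RCLike.ext (by rw [RCLike.conj_re, f.re_inner_map_map]) ?_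
  -- `im ⟪u, v⟫ = re ⟪u, conj I • v⟫`, and `f (I • y) = conj I • f y`
  have := f.re_inner_map_map x ((RCLike.I : 𝕜) • y)
  rw [f.map_smulₛₗ, RCLike.conj_I, inner_smul_right, inner_smul_right, neg_mul, map_neg,
    RCLike.I_mul_re, RCLike.I_mul_re, neg_neg] at this
  rw [RCLike.conj_im, this]

end LinearIsometry

theorem inner_conj_star_conj_apply {H : Type*} [NormedAddCommGroup H] [InnerProductSpace ℂ H]
    [CompleteSpace H] (J : H →ₗᵢ⋆[ℂ] H) (a : H →L[ℂ] H) {γ : H} (hJγ : J γ = γ)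
    (ha : a γ = J (star a γ)) (ζ : H) :
    ⟪γ, J (star a (J ζ))⟫_ℂ = ⟪γ, a ζ⟫_ℂ :=
  calc ⟪γ, J (star a (J ζ))⟫_ℂ
      = ⟪J ζ, a γ⟫_ℂ := by
        rw [← hJγ, J.inner_map_map_of_starRingEnd, hJγ, ContinuousLinearMap.star_eq_adjoint,
          ContinuousLinearMap.adjoint_inner_left]
    _ = ⟪γ, a ζ⟫_ℂ := by
        rw [ha, J.inner_map_map_of_starRingEnd, ContinuousLinearMap.star_eq_adjoint,
          ContinuousLinearMap.adjoint_inner_left]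

/-- Lemma 6.8(ii), first part: if a ∈ M satisfies j(a)γ₀ = a*γ₀, then a
commutes with the vector functional ρ₀ = E(γ₀): ρ₀(a x) = ρ₀(x a) for x ∈ M. -/
theorem stmt12 {H : Type*} [NormedAddCommGroup H] [InnerProductSpace ℂ H]
    [CompleteSpace H]
    (M : VonNeumannAlgebra H) (γ₀ : H) (J : H → H)
    (hJadd : ∀ ξ η : H, J (ξ + η) = J ξ + J η)
    (hJsmul : ∀ (c : ℂ) (ξ : H), J (c • ξ) = (starRingEnd ℂ c) • J ξ)
    (hJnorm : ∀ ξ : H, ‖J ξ‖ = ‖ξ‖)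
    (hJinv : ∀ ξ : H, J (J ξ) = ξ)
    (hJγ₀ : J γ₀ = γ₀)
    (j : (H →L[ℂ] H) → (H →L[ℂ] H))
    (hj : ∀ (a : H →L[ℂ] H) (ξ : H), j a ξ = J (a (J ξ)))
    (hjM : ∀ a : H →L[ℂ] H, a ∈ M → j a ∈ M.commutant)
    (a : H →L[ℂ] H) (ha : a ∈ M)
    (haJ : J (a γ₀) = (star a) γ₀) :
    ∀ x : H →L[ℂ] H, x ∈ M →
      (inner ℂ γ₀ (a (x γ₀)) : ℂ) = inner ℂ γ₀ (x (a γ₀)) := by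
  intro x hx
  let Jₗ : H →ₗᵢ⋆[ℂ] H := ⟨⟨⟨J, hJadd⟩, hJsmul⟩, hJnorm⟩
  have haγ₀ : a γ₀ = J (star a γ₀) := by rw [← haJ, hJinv]
  have hxa : x (a γ₀) = J (star a (J (x γ₀))) := by
    have hcomm := VonNeumannAlgebra.mem_commutant_iff.mp (hjM _ (star_mem ha)) x hx
    have hcomm_γ₀ := congr($hcomm γ₀)
    rwa [mul_apply_eq_comp, mul_apply_eq_comp, hj, hj, hJγ₀, ← haγ₀] at hcomm_γ₀
  rw [hxa]
  exact (inner_conj_star_conj_apply Jₗ a hJγ₀ haγ₀ (x γ₀)).symm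
end

section
/- Let M be a von Neumann algebra on a complex Hilbert space H, let J be a conjugation of H with J γ₀ = γ₀ for a fixed γ₀ ∈ H, and assume J M J ⊆ M'. Let u ∈ M be a partial isometry (u ∘ (star u) ∘ u = u) with ((star u) ∘ u) γ₀ = γ₀. Then u(J(u γ₀)) = γ₀ if and only if J(u γ₀) = (star u) γ₀. (Lemma 6.8(ii): the stabilizer condition β(u)γ₀ = γ₀ is equivalent to j(u)γ₀ = u*γ₀.) -/
open scoped ComplexInnerProductSpace


/-- Lemma 6.8(ii), second part: for a partial isometry u ∈ M with (u*u)γ₀ = γ₀,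
the stabilizer condition u·j(u)·γ₀ = γ₀ is equivalent to j(u)γ₀ = u*γ₀. -/
theorem stmt13 {H : Type*} [NormedAddCommGroup H] [InnerProductSpace ℂ H]
    [CompleteSpace H]
    (M : VonNeumannAlgebra H) (γ₀ : H) (J : H → H)
    (hJadd : ∀ ξ η : H, J (ξ + η) = J ξ + J η)
    (hJsmul : ∀ (c : ℂ) (ξ : H), J (c • ξ) = (starRingEnd ℂ c) • J ξ)
    (hJnorm : ∀ ξ : H, ‖J ξ‖ = ‖ξ‖)
    (hJinv : ∀ ξ : H, J (J ξ) = ξ)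
    (hJγ₀ : J γ₀ = γ₀)
    (j : (H →L[ℂ] H) → (H →L[ℂ] H))
    (hj : ∀ (a : H →L[ℂ] H) (ξ : H), j a ξ = J (a (J ξ)))
    (hjM : ∀ a : H →L[ℂ] H, a ∈ M → j a ∈ M.commutant)
    (u : H →L[ℂ] H) (hu : u ∈ M)
    (hpi : u * star u * u = u)
    (huγ : (star u * u) γ₀ = γ₀) :
    u (J (u γ₀)) = γ₀ ↔ J (u γ₀) = (star u) γ₀ := by
  have hju : ∀ ξ, j u ξ = J (u (J ξ)) := hj u
  have hjuγ : j u γ₀ = J (u γ₀) := by rw [hju, hJγ₀]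
  constructor
  · intro hβ
    -- apply u* to hβ, use that j u commutes with u* u
    have hc : (star u * u) * j u = j u * (star u * u) := by
      have := (VonNeumannAlgebra.mem_commutant_iff).mp (hjM u hu)
      exact this _ (mul_mem (star_mem hu) hu)
    have h1 : (star u) ((u) (J (u γ₀))) = (star u) γ₀ := by rw [hβ]
    calc J (u γ₀) = j u γ₀ := hjuγ.symm
      _ = j u ((star u * u) γ₀) := by rw [huγ]
      _ = ((star u * u) * j u) γ₀ := by
          rw [hc]; rfl
      _ = (star u) (u (J (u γ₀))) := by
          simp [ContinuousLinearMap.mul_apply, hjuγ]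
      _ = (star u) γ₀ := h1
  · intro hs
    have hadj : star u = ContinuousLinearMap.adjoint u := ContinuousLinearMap.star_eq_adjoint u
    have hstarpi : star u * u * star u = star u := by
      have := congrArg star hpi
      simpa [star_mul, mul_assoc] using this
    have hback : (star u) (u ((star u) γ₀)) = (star u) γ₀ := by
      have := congrArg (fun a : H →L[ℂ] H => a γ₀) hstarpi
      simpa using this
    have h2 : ⟪u γ₀, u γ₀⟫ = ⟪γ₀, γ₀⟫ := by
      rw [← ContinuousLinearMap.adjoint_inner_right u γ₀ (u γ₀), ← hadj,
        ← ContinuousLinearMap.mul_apply, huγ]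
    have n1 : ‖(star u) γ₀‖ = ‖γ₀‖ := by
      rw [← hs, hJnorm]
      rw [inner_self_eq_norm_sq_to_K, inner_self_eq_norm_sq_to_K] at h2
      have h2' : ‖u γ₀‖ ^ 2 = ‖γ₀‖ ^ 2 := by exact_mod_cast h2
      calc ‖u γ₀‖ = Real.sqrt (‖u γ₀‖ ^ 2) := (Real.sqrt_sq (norm_nonneg _)).symm
        _ = Real.sqrt (‖γ₀‖ ^ 2) := by rw [h2']
        _ = ‖γ₀‖ := Real.sqrt_sq (norm_nonneg _)
    have e1 : ⟪(star u) γ₀, (star u) γ₀⟫ = ⟪γ₀, γ₀⟫ := by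
      rw [inner_self_eq_norm_sq_to_K, inner_self_eq_norm_sq_to_K, n1]
    have e2 : ⟪γ₀, u ((star u) γ₀)⟫ = ⟪(star u) γ₀, (star u) γ₀⟫ := by
      rw [hadj]
      exact (ContinuousLinearMap.adjoint_inner_left u
        ((ContinuousLinearMap.adjoint u) γ₀) γ₀).symm
    have e3 : ⟪u ((star u) γ₀), γ₀⟫ = ⟪(star u) γ₀, (star u) γ₀⟫ := by
      rw [← inner_conj_symm, e2, inner_conj_symm]
    have e4 : ⟪u ((star u) γ₀), u ((star u) γ₀)⟫ = ⟪(star u) γ₀, (star u) γ₀⟫ := by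
      rw [hadj] at hback ⊢
      rw [← ContinuousLinearMap.adjoint_inner_right u, hback]
    have key : ⟪γ₀ - u ((star u) γ₀), γ₀ - u ((star u) γ₀)⟫ = (0 : ℂ) := by
      rw [inner_sub_sub_self, e2, e3, e4, e1]; ring
    have h0 : γ₀ - u ((star u) γ₀) = 0 := inner_self_eq_zero.mp key
    rw [hs]
    exact (sub_eq_zero.mp h0).symm
end

section
/- Let M be a von Neumann algebra on a complex Hilbert space H, let J be a conjugation of H with J γ₀ = γ₀ for a fixed γ₀ ∈ H, and assume J M J ⊆ M'. Let u₁, u₂ ∈ M satisfy: u₁ is a partial isometry (u₁ ∘ (star u₁) ∘ u₁ = u₁), (star u₁)∘u₁ = (star u₂)∘u₂, u₁∘(star u₁) = u₂∘(star u₂), ((star u₁)∘u₁) γ₀ = γ₀, and u₁(J(u₁ γ₀)) = u₂(J(u₂ γ₀)). Then g := (star u₂) ∘ u₁ satisfies u₂ ∘ g = u₁ and g(J(g γ₀)) = γ₀. (Lemma 6.8(iii): two elements of P₀ with equal image under β_{γ₀} differ by an element of the stabilizer U_{ρ₀}.) -/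
/-- Lemma 6.8(iii): two elements of P₀ with equal image under β_{γ₀} differ by
an element of the stabilizer U_{ρ₀}: g = u₂* u₁ satisfies u₂ g = u₁ and
g·j(g)·γ₀ = γ₀. -/
theorem stmt14 {H : Type*} [NormedAddCommGroup H] [InnerProductSpace ℂ H]
    [CompleteSpace H]
    (M : VonNeumannAlgebra H) (γ₀ : H) (J : H → H)
    (hJadd : ∀ ξ η : H, J (ξ + η) = J ξ + J η)
    (hJsmul : ∀ (c : ℂ) (ξ : H), J (c • ξ) = (starRingEnd ℂ c) • J ξ)
    (hJnorm : ∀ ξ : H, ‖J ξ‖ = ‖ξ‖)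
    (hJinv : ∀ ξ : H, J (J ξ) = ξ)
    (hJγ₀ : J γ₀ = γ₀)
    (j : (H →L[ℂ] H) → (H →L[ℂ] H))
    (hj : ∀ (a : H →L[ℂ] H) (ξ : H), j a ξ = J (a (J ξ)))
    (hjM : ∀ a : H →L[ℂ] H, a ∈ M → j a ∈ M.commutant)
    (u₁ u₂ : H →L[ℂ] H) (hu₁ : u₁ ∈ M) (hu₂ : u₂ ∈ M)
    (hpi : u₁ * star u₁ * u₁ = u₁)
    (hinit : star u₁ * u₁ = star u₂ * u₂)
    (hfin : u₁ * star u₁ = u₂ * star u₂)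
    (hγ : (star u₁ * u₁) γ₀ = γ₀)
    (hβ : u₁ (J (u₁ γ₀)) = u₂ (J (u₂ γ₀))) :
    u₂ * (star u₂ * u₁) = u₁ ∧
      (star u₂ * u₁) (J ((star u₂ * u₁) γ₀)) = γ₀ := by
  have hg : star u₂ * u₁ ∈ M := mul_mem (star_mem hu₂) hu₁
  constructor
  · rw [← mul_assoc, ← hfin, mul_assoc, ← mul_assoc, hpi]
  · -- commutation facts
    have hc1 : u₁ * j (star u₂ * u₁) = j (star u₂ * u₁) * u₁ :=
      (VonNeumannAlgebra.mem_commutant_iff.mp (hjM _ hg)) u₁ hu₁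
    have hp : star u₂ * u₂ ∈ M := mul_mem (star_mem hu₂) hu₂
    have hc2 : u₂ * j (star u₂ * u₂) = j (star u₂ * u₂) * u₂ :=
      (VonNeumannAlgebra.mem_commutant_iff.mp (hjM _ hp)) u₂ hu₂
    have hγ' : (star u₂ * u₂) γ₀ = γ₀ := by rw [← hinit]; exact hγ
    -- key: u₁ (J ((star u₂ * u₁) γ₀)) = u₂ γ₀
    have key : u₁ (J ((star u₂ * u₁) γ₀)) = u₂ γ₀ := by
      have e1 : J ((star u₂ * u₁) γ₀) = j (star u₂ * u₁) γ₀ := by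
        rw [hj, hJγ₀]
      rw [e1]
      have e2 : u₁ (j (star u₂ * u₁) γ₀) = (u₁ * j (star u₂ * u₁)) γ₀ := rfl
      rw [e2, hc1]
      have e3 : (j (star u₂ * u₁) * u₁) γ₀ = J ((star u₂ * u₁) (J (u₁ γ₀))) := by
        simp [ContinuousLinearMap.mul_apply, hj]
      rw [e3]
      have e4 : (star u₂ * u₁) (J (u₁ γ₀)) = star u₂ (u₁ (J (u₁ γ₀))) := rfl
      rw [e4, hβ]
      have e5 : star u₂ (u₂ (J (u₂ γ₀))) = (star u₂ * u₂) (J (u₂ γ₀)) := rfl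
      rw [e5]
      have e6 : J ((star u₂ * u₂) (J (u₂ γ₀))) = j (star u₂ * u₂) (u₂ γ₀) := by
        rw [hj]
      rw [e6]
      have e7 : j (star u₂ * u₂) (u₂ γ₀) = (j (star u₂ * u₂) * u₂) γ₀ := rfl
      rw [e7, ← hc2]
      have e8 : (u₂ * j (star u₂ * u₂)) γ₀ = u₂ (J ((star u₂ * u₂) γ₀)) := by
        simp [ContinuousLinearMap.mul_apply, hj, hJγ₀]
      rw [e8, hγ', hJγ₀]
    calc (star u₂ * u₁) (J ((star u₂ * u₁) γ₀))
        = star u₂ (u₁ (J ((star u₂ * u₁) γ₀))) := rfl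
      _ = star u₂ (u₂ γ₀) := by rw [key]
      _ = (star u₂ * u₂) γ₀ := rfl
      _ = γ₀ := hγ'
end

section
/- Let M be a von Neumann algebra on a complex Hilbert space H, let J be a conjugation of H, let γ₀ ∈ H with J γ₀ = γ₀, and let P ⊆ H be a set such that: γ₀ ∈ P; for all ξ, η ∈ P the real part of ⟪ξ, η⟫ is nonnegative; and for every b ∈ M and ξ ∈ P one has b(J(b(J ξ))) ∈ P (the cone axiom b·j(b)·P ⊆ P). Let p₀ be the orthogonal projection of H onto the closure of {x' γ₀ : x' ∈ M'}. If x, y ∈ M satisfy star x = −x, star y = −y, x ∘ p₀ = x, y ∘ p₀ = y, and x γ₀ + J(y γ₀) = 0, then x = y. (This is the key injectivity step in the proof of Theorem 6.10, showing Ker TΨ_{γ₀} = Ker TΨ.) -/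
/-!
Put `z = x - y`, a skew-adjoint element of `M`. The relation `x γ₀ + J (y γ₀) = 0` makes `z γ₀`
fixed by `J`, so for real `t` the operator `b = 1 + t z` satisfies `j(b) γ₀ = b γ₀` and the cone
axiom puts `b² γ₀` in `P`. As `b* = 1 - t z`, pairing with `γ₀ ∈ P` gives
`0 ≤ Re ⟪b² γ₀, γ₀⟫ = ‖γ₀‖² - t² ‖z γ₀‖²` for every `t`, hence `z γ₀ = 0`. Since `z` commutes with
`M'`, it then vanishes on `[M' γ₀] ⊇ range p₀`, and `x = x p₀ = y p₀ = y`.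
-/

open ContinuousLinearMap

section

variable {H : Type*} [NormedAddCommGroup H] [InnerProductSpace ℂ H]

theorem re_inner_add_sub (a b : H) :
    (inner ℂ (a + b) (a - b)).re = ‖a‖ ^ 2 - ‖b‖ ^ 2 := by
  have hsymm : (inner ℂ b a).re = (inner ℂ a b).re := inner_re_symm (𝕜 := ℂ) b a
  have ha : (inner ℂ a a).re = ‖a‖ ^ 2 := inner_self_eq_norm_sq (𝕜 := ℂ) a
  have hb : (inner ℂ b b).re = ‖b‖ ^ 2 := inner_self_eq_norm_sq (𝕜 := ℂ) b
  simp only [inner_add_left, inner_sub_right, Complex.add_re, Complex.sub_re, hsymm, ha, hb]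
  ring

theorem apply_sub_eq_of_add_apply_eq_zero {J : H →ₗ⋆[ℂ] H} (hJ : Function.Involutive J)
    {a b : H} (h : a + J b = 0) : J (a - b) = a - b := by
  have hb : J b = -a := eq_neg_of_add_eq_zero_right h
  have ha : J a = -b := by rw [← hJ b, hb, map_neg, neg_neg]
  rw [map_sub, ha, hb, sub_neg_eq_add, neg_add_eq_sub]

end

theorem eq_zero_of_forall_sq_mul_le {a b : ℝ} (ha : 0 ≤ a) (h : ∀ t : ℝ, t ^ 2 * a ≤ b) :
    a = 0 := by
  refine ha.antisymm' (not_lt.mp fun ha' => ?_)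
  have := h (√((|b| + 1) / a))
  rw [Real.sq_sqrt (by positivity), div_mul_cancel₀ _ ha'.ne'] at this
  linarith [le_abs_self b]

section

variable {H : Type*} [NormedAddCommGroup H] [InnerProductSpace ℂ H] [CompleteSpace H]

theorem re_inner_apply_apply_of_star_eq_neg {z : H →L[ℂ] H} (hz : star z = -z) (t : ℝ)
    (v : H) :
    (inner ℂ ((1 + (t : ℂ) • z) ((1 + (t : ℂ) • z) v)) v).re = ‖v‖ ^ 2 - ‖(t : ℂ) • z v‖ ^ 2 := by
  have hstar : adjoint (1 + (t : ℂ) • z) = 1 - (t : ℂ) • z := by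
    rw [← star_eq_adjoint, star_add, star_one, star_smul, hz, Complex.star_def,
      Complex.conj_ofReal, smul_neg, ← sub_eq_add_neg]
  rw [← adjoint_inner_right, hstar]
  simpa only [add_apply, sub_apply, one_apply_eq_self, smul_apply] using
    re_inner_add_sub v ((t : ℂ) • z v)

theorem apply_eq_zero_of_star_eq_neg_of_cone (M : VonNeumannAlgebra H) (J : H →ₗ⋆[ℂ] H)
    {P : Set H}
    (hPpos : ∀ ξ ∈ P, ∀ η ∈ P, 0 ≤ (inner ℂ ξ η).re)
    (hcone : ∀ b : H →L[ℂ] H, b ∈ M → ∀ ξ ∈ P, b (J (b (J ξ))) ∈ P)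
    {γ : H} (hγP : γ ∈ P) (hJγ : J γ = γ) {z : H →L[ℂ] H} (hzM : z ∈ M)
    (hz : star z = -z) (hJz : J (z γ) = z γ) : z γ = 0 := by
  have hle : ∀ t : ℝ, t ^ 2 * ‖z γ‖ ^ 2 ≤ ‖γ‖ ^ 2 := by
    intro t
    set b : H →L[ℂ] H := 1 + (t : ℂ) • z
    have hJb : J (b (J γ)) = b γ := by
      simp only [b, add_apply, one_apply_eq_self, hJγ, smul_apply, map_add,
        LinearMap.map_smulₛₗ, hJz, Complex.conj_ofReal]
    have hbM : b ∈ M := add_mem (one_mem M) (M.toStarSubalgebra.smul_mem hzM _)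
    have hpos := hPpos _ (hcone b hbM γ hγP) γ hγP
    rw [hJb, re_inner_apply_apply_of_star_eq_neg hz, norm_smul, Complex.norm_real,
      Real.norm_eq_abs, mul_pow, sq_abs] at hpos
    linarith
  exact norm_eq_zero.mp (pow_eq_zero_iff two_ne_zero |>.mp
    (eq_zero_of_forall_sq_mul_le (by positivity) hle))

theorem closure_span_commutant_apply_le_ker {M : VonNeumannAlgebra H}
    {z : H →L[ℂ] H} (hzM : z ∈ M) {γ : H} (hz : z γ = 0) :
    (Submodule.span ℂ {w : H | ∃ x' : H →L[ℂ] H, x' ∈ M.commutant ∧ w = x' γ}).topologicalClosure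
      ≤ LinearMap.ker (z : H →ₗ[ℂ] H) := by
  refine Submodule.topologicalClosure_minimal _ ?_ z.isClosed_ker
  rw [Submodule.span_le]
  rintro _ ⟨x', hx', rfl⟩
  have hcomm : z * x' = x' * z := VonNeumannAlgebra.mem_commutant_iff.mp hx' z hzM
  calc z (x' γ) = (z * x') γ := rfl
    _ = x' (z γ) := by rw [hcomm]; rfl
    _ = 0 := by rw [hz, map_zero]

end

theorem stmt15_general {H : Type*} [NormedAddCommGroup H] [InnerProductSpace ℂ H]
    [CompleteSpace H]
    (M : VonNeumannAlgebra H) (γ₀ : H) (J : H → H)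
    (hJadd : ∀ ξ η : H, J (ξ + η) = J ξ + J η)
    (hJsmul : ∀ (c : ℂ) (ξ : H), J (c • ξ) = (starRingEnd ℂ c) • J ξ)
    (hJinv : ∀ ξ : H, J (J ξ) = ξ)
    (hJγ₀ : J γ₀ = γ₀)
    (P : Set H) (hγ₀P : γ₀ ∈ P)
    (hPpos : ∀ ξ ∈ P, ∀ η ∈ P, 0 ≤ (inner ℂ ξ η : ℂ).re)
    (hcone : ∀ b : H →L[ℂ] H, b ∈ M → ∀ ξ ∈ P, b (J (b (J ξ))) ∈ P)
    (K : Submodule ℂ H)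
    (hK : K = (Submodule.span ℂ
      {w : H | ∃ x' : H →L[ℂ] H, x' ∈ M.commutant ∧ w = x' γ₀}).topologicalClosure)
    (p₀ : H →L[ℂ] H)
    (hp₀ : ∀ ξ : H, p₀ ξ ∈ K ∧ ξ - p₀ ξ ∈ Kᗮ)
    (x y : H →L[ℂ] H) (hx : x ∈ M) (hy : y ∈ M)
    (hxs : star x = -x) (hys : star y = -y)
    (hxp : x ∘L p₀ = x) (hyp : y ∘L p₀ = y)
    (hxy : x γ₀ + J (y γ₀) = 0) :
    x = y := by
  let Jₛ : H →ₗ⋆[ℂ] H := { toFun := J, map_add' := hJadd, map_smul' := hJsmul }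
  have hzM : x - y ∈ M := sub_mem hx hy
  have hzs : star (x - y) = -(x - y) := by rw [star_sub, hxs, hys, neg_sub_neg, neg_sub]
  have hJz : J ((x - y) γ₀) = (x - y) γ₀ :=
    apply_sub_eq_of_add_apply_eq_zero (J := Jₛ) hJinv hxy
  have hz0 : (x - y) γ₀ = 0 :=
    apply_eq_zero_of_star_eq_neg_of_cone M Jₛ hPpos hcone hγ₀P hJγ₀ hzM hzs hJz
  have hzK : K ≤ LinearMap.ker ((x - y : H →L[ℂ] H) : H →ₗ[ℂ] H) :=
    hK ▸ closure_span_commutant_apply_le_ker hzM hz0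
  calc x = x ∘L p₀ := hxp.symm
    _ = y ∘L p₀ := by
      ext ξ
      exact sub_eq_zero.mp (hzK (hp₀ ξ).1)
    _ = y := hyp

/-- Key injectivity step in the proof of Theorem 6.10 (Ker TΨ_{γ₀} = Ker TΨ):
if x, y ∈ M are skew-adjoint, supported on p₀ = [M'γ₀], and
x γ₀ + J(y γ₀) = 0, then x = y. -/
theorem stmt15 {H : Type*} [NormedAddCommGroup H] [InnerProductSpace ℂ H]
    [CompleteSpace H]
    (M : VonNeumannAlgebra H) (γ₀ : H) (J : H → H)
    (hJadd : ∀ ξ η : H, J (ξ + η) = J ξ + J η)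
    (hJsmul : ∀ (c : ℂ) (ξ : H), J (c • ξ) = (starRingEnd ℂ c) • J ξ)
    (hJnorm : ∀ ξ : H, ‖J ξ‖ = ‖ξ‖)
    (hJinv : ∀ ξ : H, J (J ξ) = ξ)
    (hJγ₀ : J γ₀ = γ₀)
    (P : Set H) (hγ₀P : γ₀ ∈ P)
    (hPpos : ∀ ξ ∈ P, ∀ η ∈ P, 0 ≤ (inner ℂ ξ η : ℂ).re)
    (hcone : ∀ b : H →L[ℂ] H, b ∈ M → ∀ ξ ∈ P, b (J (b (J ξ))) ∈ P)
    (K : Submodule ℂ H)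
    (hK : K = (Submodule.span ℂ
      {w : H | ∃ x' : H →L[ℂ] H, x' ∈ M.commutant ∧ w = x' γ₀}).topologicalClosure)
    (p₀ : H →L[ℂ] H)
    (hp₀ : ∀ ξ : H, p₀ ξ ∈ K ∧ ξ - p₀ ξ ∈ Kᗮ)
    (x y : H →L[ℂ] H) (hx : x ∈ M) (hy : y ∈ M)
    (hxs : star x = -x) (hys : star y = -y)
    (hxp : x ∘L p₀ = x) (hyp : y ∘L p₀ = y)
    (hxy : x γ₀ + J (y γ₀) = 0) :
    x = y :=
  stmt15_general M γ₀ J hJadd hJsmul hJinv hJγ₀ P hγ₀P hPpos hcone K hK p₀ hp₀ x y hx hy hxs hys hxp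
    hyp hxy
end

section
/- Let M be a von Neumann algebra on a complex Hilbert space H, let J be a conjugation of H with J γ₀ = γ₀ for a fixed γ₀ ∈ H, and assume j(a) ∈ M' for every a ∈ M, where j(a)ξ = J(a(Jξ)). Let u, v, u̇₁, u̇₂, v̇₁, v̇₂ ∈ M satisfy ((star u)∘u) γ₀ = γ₀, ((star v)∘v) γ₀ = γ₀, and for i = 1, 2: star((star u)∘u̇ᵢ) = −((star u)∘u̇ᵢ) and star((star v)∘v̇ᵢ) = −((star v)∘v̇ᵢ). Set Tᵢ := u̇ᵢ(J(v γ₀)) + u(J(v̇ᵢ γ₀)) for i = 1, 2. Then Im⟪T₁, T₂⟫ = Im⟪u̇₁ γ₀, u̇₂ γ₀⟫ − Im⟪v̇₁ γ₀, v̇₂ γ₀⟫. (Proposition 6.14, formula (SQ5_eq1): the pull-back of the symplectic form of H under Ψ_{γ₀}(u,v) = u·j(v)·γ₀ is the difference of the orbit symplectic forms in the u- and v-variables.) -/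
/-!
Put `w = j v` and `cᵢ = j v̇ᵢ`, both in `M'`; then `Tᵢ = u̇ᵢ (w γ₀) + u (cᵢ γ₀)` is a tangent vector
of `(u, w) ↦ u (w γ₀)` with `u ∈ M`, `w ∈ M'`. Since `M` and `M'` commute, `(star w * w) γ₀ = γ₀` and
`(star u * u) γ₀ = γ₀` turn the diagonal terms of `⟪T₁, T₂⟫` into `⟪u̇₁ γ₀, u̇₂ γ₀⟫` and
`⟪c₁ γ₀, c₂ γ₀⟫`, while a cross term becomes `⟪(star u * u̇) γ₀, (star w * c) γ₀⟫`, which is real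
because `star u * u̇` and `star w * c` are commuting skew-adjoint operators. Finally `J` is antiunitary, so `⟪c₁ γ₀, c₂ γ₀⟫ = ⟪v̇₂ γ₀, v̇₁ γ₀⟫`.
-/

open ComplexConjugate

section Conjugation

variable {H : Type*} [NormedAddCommGroup H] [InnerProductSpace ℂ H] {J : H → H}

theorem inner_map_map_of_conjLinear_isometry (hJadd : ∀ ξ η : H, J (ξ + η) = J ξ + J η)
    (hJsmul : ∀ (c : ℂ) (ξ : H), J (c • ξ) = (starRingEnd ℂ c) • J ξ)
    (hJnorm : ∀ ξ : H, ‖J ξ‖ = ‖ξ‖) (ξ η : H) :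
    inner ℂ (J ξ) (J η) = inner ℂ η ξ := by
  have hsub : ∀ ξ η : H, J ξ - J η = J (ξ - η) := fun ξ η =>
    (map_sub (AddMonoidHom.mk' J hJadd) ξ η).symm
  have hIsmul : ∀ ξ : H, Complex.I • J ξ = -J (Complex.I • ξ) := fun ξ => by simp [hJsmul]
  rw [← inner_conj_symm η ξ, inner_eq_sum_norm_sq_div_four ξ η,
    inner_eq_sum_norm_sq_div_four (J ξ)]
  simp only [RCLike.I_to_complex]
  simp only [hIsmul, sub_neg_eq_add, ← sub_eq_add_neg, ← hJadd, hsub, hJnorm, map_div₀, map_add,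
    map_sub, map_mul, map_pow, RCLike.conj_ofReal, Complex.conj_I, map_ofNat]
  ring

variable {j : (H →L[ℂ] H) → (H →L[ℂ] H)}

theorem map_mul_of_conj (hj : ∀ (a : H →L[ℂ] H) (ξ : H), j a ξ = J (a (J ξ)))
    (hJinv : ∀ ξ : H, J (J ξ) = ξ) (a b : H →L[ℂ] H) :
    j (a * b) = j a * j b := by
  ext ξ
  simp [hj, hJinv]

theorem map_neg_of_conj (hj : ∀ (a : H →L[ℂ] H) (ξ : H), j a ξ = J (a (J ξ)))
    (hJadd : ∀ ξ η : H, J (ξ + η) = J ξ + J η) (a : H →L[ℂ] H) :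
    j (-a) = -j a := by
  ext ξ
  simpa [hj] using map_neg (AddMonoidHom.mk' J hJadd) (a (J ξ))

theorem star_map_of_conj [CompleteSpace H] (hj : ∀ (a : H →L[ℂ] H) (ξ : H), j a ξ = J (a (J ξ)))
    (hJadd : ∀ ξ η : H, J (ξ + η) = J ξ + J η)
    (hJsmul : ∀ (c : ℂ) (ξ : H), J (c • ξ) = (starRingEnd ℂ c) • J ξ)
    (hJnorm : ∀ ξ : H, ‖J ξ‖ = ‖ξ‖) (hJinv : ∀ ξ : H, J (J ξ) = ξ) (a : H →L[ℂ] H) :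
    star (j a) = j (star a) := by
  have hinner := inner_map_map_of_conjLinear_isometry hJadd hJsmul hJnorm
  rw [ContinuousLinearMap.star_eq_adjoint]
  refine ((ContinuousLinearMap.eq_adjoint_iff _ (j a)).mpr fun ξ η => ?_).symm
  rw [hj, hj, ← hJinv η, hinner, hJinv, ContinuousLinearMap.star_eq_adjoint,
    ContinuousLinearMap.adjoint_inner_right, ← hinner, hJinv]

theorem skew_map_of_conj [CompleteSpace H] (hj : ∀ (a : H →L[ℂ] H) (ξ : H), j a ξ = J (a (J ξ)))
    (hJadd : ∀ ξ η : H, J (ξ + η) = J ξ + J η)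
    (hJsmul : ∀ (c : ℂ) (ξ : H), J (c • ξ) = (starRingEnd ℂ c) • J ξ)
    (hJnorm : ∀ ξ : H, ‖J ξ‖ = ‖ξ‖) (hJinv : ∀ ξ : H, J (J ξ) = ξ) {a : H →L[ℂ] H}
    (ha : star a = -a) : star (j a) = -j a := by
  rw [star_map_of_conj hj hJadd hJsmul hJnorm hJinv, ha, map_neg_of_conj hj hJadd]

theorem star_map_mul_map_of_conj [CompleteSpace H]
    (hj : ∀ (a : H →L[ℂ] H) (ξ : H), j a ξ = J (a (J ξ)))
    (hJadd : ∀ ξ η : H, J (ξ + η) = J ξ + J η)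
    (hJsmul : ∀ (c : ℂ) (ξ : H), J (c • ξ) = (starRingEnd ℂ c) • J ξ)
    (hJnorm : ∀ ξ : H, ‖J ξ‖ = ‖ξ‖) (hJinv : ∀ ξ : H, J (J ξ) = ξ) (a b : H →L[ℂ] H) :
    star (j a) * j b = j (star a * b) := by
  rw [star_map_of_conj hj hJadd hJsmul hJnorm hJinv, map_mul_of_conj hj hJinv]

end Conjugation

section Operators

variable {H : Type*} [NormedAddCommGroup H] [InnerProductSpace ℂ H] [CompleteSpace H]

open ContinuousLinearMap

theorem inner_apply_apply_of_commute_star_mul_self {a c : H →L[ℂ] H} {γ : H}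
    (hc : Commute (star a * a) c) (hγ : (star a * a) γ = γ) (ξ : H) :
    inner ℂ (a ξ) (a (c γ)) = inner ℂ ξ (c γ) := by
  rw [← adjoint_inner_right, ← star_eq_adjoint]
  exact congrArg _ (congr($(hc.eq) γ).trans (congrArg c hγ))

theorem inner_apply_apply_eq_inner_star_mul {u du w c : H →L[ℂ] H} (γ : H)
    (hw : Commute (star u * du) w) :
    inner ℂ (du (w γ)) (u (c γ)) = inner ℂ ((star u * du) γ) ((star w * c) γ) := by
  calc inner ℂ (du (w γ)) (u (c γ)) = inner ℂ ((star u * du) (w γ)) (c γ) := by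
        rw [← adjoint_inner_left, ← star_eq_adjoint, mul_apply_eq_comp]
    _ = inner ℂ (w ((star u * du) γ)) (c γ) := congrArg (inner ℂ · (c γ)) congr($(hw.eq) γ)
    _ = inner ℂ ((star u * du) γ) ((star w * c) γ) := by
        rw [mul_apply_eq_comp (star w), star_eq_adjoint w, adjoint_inner_right]

theorem im_inner_eq_zero_of_commute_of_skew {b c : H →L[ℂ] H} (hb : star b = -b)
    (hc : star c = -c) (hbc : Commute b c) (γ : H) : (inner ℂ (b γ) (c γ)).im = 0 := by
  refine Complex.conj_eq_iff_im.mp ?_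
  calc conj (inner ℂ (b γ) (c γ)) = inner ℂ γ (star c (b γ)) := by
        rw [inner_conj_symm, star_eq_adjoint, adjoint_inner_right]
    _ = -inner ℂ γ (b (c γ)) := by
        rw [hc, neg_apply, inner_neg_right, ← mul_apply_eq_comp c, ← mul_apply_eq_comp b, hbc.eq]
    _ = inner ℂ (b γ) (c γ) := by
        rw [← adjoint_inner_left, ← star_eq_adjoint, hb, neg_apply, inner_neg_left, neg_neg]

end Operators

namespace VonNeumannAlgebra

variable {H : Type*} [NormedAddCommGroup H] [InnerProductSpace ℂ H] [CompleteSpace H]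
  {M : VonNeumannAlgebra H}

theorem commute_of_mem_commutant {a b : H →L[ℂ] H} (ha : a ∈ M) (hb : b ∈ M.commutant) :
    Commute a b :=
  mem_commutant_iff.mp hb a ha

theorem im_inner_tangent_mul_commutant {u du₁ du₂ w c₁ c₂ : H →L[ℂ] H} {γ : H}
    (hu : u ∈ M) (hdu₁ : du₁ ∈ M) (hdu₂ : du₂ ∈ M)
    (hw : w ∈ M.commutant) (hc₁ : c₁ ∈ M.commutant) (hc₂ : c₂ ∈ M.commutant)
    (huγ : (star u * u) γ = γ) (hwγ : (star w * w) γ = γ)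
    (hdu₁_skew : star (star u * du₁) = -(star u * du₁))
    (hdu₂_skew : star (star u * du₂) = -(star u * du₂))
    (hc₁_skew : star (star w * c₁) = -(star w * c₁))
    (hc₂_skew : star (star w * c₂) = -(star w * c₂)) :
    (inner ℂ (du₁ (w γ) + u (c₁ γ)) (du₂ (w γ) + u (c₂ γ))).im =
      (inner ℂ (du₁ γ) (du₂ γ)).im + (inner ℂ (c₁ γ) (c₂ γ)).im := by
  have hswap : ∀ {du}, du ∈ M → du (w γ) = w (du γ) := fun hdu =>
    congr($((commute_of_mem_commutant hdu hw).eq) γ)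
  have hdu : inner ℂ (du₁ (w γ)) (du₂ (w γ)) = inner ℂ (du₁ γ) (du₂ γ) := by
    rw [hswap hdu₁, hswap hdu₂, inner_apply_apply_of_commute_star_mul_self
      (commute_of_mem_commutant hdu₂ (mul_mem (star_mem hw) hw)).symm hwγ]
  have hc : inner ℂ (u (c₁ γ)) (u (c₂ γ)) = inner ℂ (c₁ γ) (c₂ γ) :=
    inner_apply_apply_of_commute_star_mul_self
      (commute_of_mem_commutant (mul_mem (star_mem hu) hu) hc₂) huγ _
  have hcross : ∀ {du c}, du ∈ M → c ∈ M.commutant → star (star u * du) = -(star u * du) →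
      star (star w * c) = -(star w * c) → (inner ℂ (du (w γ)) (u (c γ))).im = 0 := by
    intro du c hdu hc hdu_skew hc_skew
    rw [inner_apply_apply_eq_inner_star_mul γ
      (commute_of_mem_commutant (mul_mem (star_mem hu) hdu) hw)]
    exact im_inner_eq_zero_of_commute_of_skew hdu_skew hc_skew
      (commute_of_mem_commutant (mul_mem (star_mem hu) hdu) (mul_mem (star_mem hw) hc)) γ
  rw [inner_add_left, inner_add_right, inner_add_right, ← inner_conj_symm (u (c₁ γ))]
  simp only [Complex.add_im, Complex.conj_im, hdu, hc, hcross hdu₁ hc₂ hdu₁_skew hc₂_skew,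
    hcross hdu₂ hc₁ hdu₂_skew hc₁_skew]
  ring

end VonNeumannAlgebra

/-- Proposition 6.14, formula (SQ5_eq1): the pull-back of the symplectic form
of H under Ψ_{γ₀}(u,v) = u·j(v)·γ₀ is the difference of the orbit symplectic
forms in the u- and v-variables. -/
theorem stmt16 {H : Type*} [NormedAddCommGroup H] [InnerProductSpace ℂ H]
    [CompleteSpace H]
    (M : VonNeumannAlgebra H) (γ₀ : H) (J : H → H)
    (hJadd : ∀ ξ η : H, J (ξ + η) = J ξ + J η)
    (hJsmul : ∀ (c : ℂ) (ξ : H), J (c • ξ) = (starRingEnd ℂ c) • J ξ)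
    (hJnorm : ∀ ξ : H, ‖J ξ‖ = ‖ξ‖)
    (hJinv : ∀ ξ : H, J (J ξ) = ξ)
    (hJγ₀ : J γ₀ = γ₀)
    (j : (H →L[ℂ] H) → (H →L[ℂ] H))
    (hj : ∀ (a : H →L[ℂ] H) (ξ : H), j a ξ = J (a (J ξ)))
    (hjM : ∀ a : H →L[ℂ] H, a ∈ M → j a ∈ M.commutant)
    (u v du₁ du₂ dv₁ dv₂ : H →L[ℂ] H)
    (hu : u ∈ M) (hv : v ∈ M)
    (hdu₁ : du₁ ∈ M) (hdu₂ : du₂ ∈ M) (hdv₁ : dv₁ ∈ M) (hdv₂ : dv₂ ∈ M)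
    (huγ : (star u * u) γ₀ = γ₀) (hvγ : (star v * v) γ₀ = γ₀)
    (h₁ : star (star u * du₁) = -(star u * du₁))
    (h₂ : star (star u * du₂) = -(star u * du₂))
    (h₃ : star (star v * dv₁) = -(star v * dv₁))
    (h₄ : star (star v * dv₂) = -(star v * dv₂)) :
    (inner ℂ (du₁ (J (v γ₀)) + u (J (dv₁ γ₀)))
           (du₂ (J (v γ₀)) + u (J (dv₂ γ₀))) : ℂ).im =
      (inner ℂ (du₁ γ₀) (du₂ γ₀) : ℂ).im - (inner ℂ (dv₁ γ₀) (dv₂ γ₀) : ℂ).im := by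
  have hjγ : ∀ a : H →L[ℂ] H, J (a γ₀) = j a γ₀ := fun a => by rw [hj, hJγ₀]
  have hstar := star_map_mul_map_of_conj hj hJadd hJsmul hJnorm hJinv
  have hvγ' : (star (j v) * j v) γ₀ = γ₀ := by rw [hstar, hj, hJγ₀, hvγ, hJγ₀]
  have hskew : ∀ {dv}, star (star v * dv) = -(star v * dv) →
      star (star (j v) * j dv) = -(star (j v) * j dv) := fun h => by
    rw [hstar]
    exact skew_map_of_conj hj hJadd hJsmul hJnorm hJinv h
  rw [hjγ v, hjγ dv₁, hjγ dv₂, VonNeumannAlgebra.im_inner_tangent_mul_commutant hu hdu₁ hdu₂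
    (hjM v hv) (hjM dv₁ hdv₁) (hjM dv₂ hdv₂) huγ hvγ' h₁ h₂ (hskew h₃) (hskew h₄), ← hjγ, ← hjγ,
    inner_map_map_of_conjLinear_isometry hJadd hJsmul hJnorm, ← inner_conj_symm (dv₁ γ₀),
    Complex.conj_im, sub_neg_eq_add]
end
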